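/- Assume v_1 ≥ v_2 ≥ … ≥ v_n and ∑_{i=1}^n v_i ≥ 1. Let k be the minimal integer with ∑_{i=1}^k v_i ≥ 1 and set U = {1,…,k}. Let M̂ be the maximum component of a multinomial random vector with T trials and probability vector (p_1,…,p_k) where p_i = v_i/v(U). Then the expected maximum load of statically offering the assortment U satisfies E(M(U)) ≥ E(M̂)/2. -/

import Mathlib

open Finset

/-- MNL choice probability of product `i` when assortment `S` is offered. -/
noncomputable def phi {n : ℕ} (v : Fin n → ℝ) (S : Finset (Fin n)) (i : Fin n) : ℝ :=
  v i / (1 + ∑ j ∈ S, v j)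

/-- MNL no-purchase probability when assortment `S` is offered. -/
noncomputable def phi0 {n : ℕ} (v : Fin n → ℝ) (S : Finset (Fin n)) : ℝ :=
  1 / (1 + ∑ j ∈ S, v j)

/-- Probability of a single customer's choice when assortment `S` is offered:
`some i` (select product `i ∈ S`) has probability `φ_i(S)`, products outside `S`
are never selected, and `none` (no purchase) has probability `φ_0(S)`. -/
noncomputable def chooseProb {n : ℕ} (v : Fin n → ℝ) (S : Finset (Fin n)) :
    Option (Fin n) → ℝ
  | none => phi0 v S
  | some i => if i ∈ S then phi v S i else 0

/-- `staticEM T v S` is the expected maximum load `E(M(S))` when assortment `S` is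
statically offered to `T` customers making independent MNL choices:
`M(S) = max_{i ∈ S} L_i(S)` where `L_i(S)` counts the customers selecting `i`. -/
noncomputable def staticEM {n : ℕ} (T : ℕ) (v : Fin n → ℝ) (S : Finset (Fin n)) : ℝ :=
  ∑ f : Fin T → Option (Fin n),
    (∏ t, chooseProb v S (f t)) *
      ((S.sup fun i => (Finset.univ.filter fun t => f t = some i).card : ℕ) : ℝ)

/-- `E(max_{1 ≤ i ≤ k} L_i)` where `(L_1, …, L_k)` is a multinomial random vector with `T`
trials and probability vector `p`. -/
noncomputable def multiExpMax (T k : ℕ) (p : Fin k → ℝ) : ℝ :=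
  ∑ f : Fin T → Fin k,
    (∏ t, p (f t)) *
      ((Finset.univ.sup fun i => (Finset.univ.filter fun t => f t = i).card : ℕ) : ℝ)


/-!
Couple the MNL choices with `T` i.i.d. draws `(j, c)`, where `j` follows `p` and an independent
coin `c ∈ {0, 1, 2}` has probabilities `1/(1+V)`, `(V-1)/(1+V)`, `1/(1+V)` (here `V = v(U) ≥ 1`):
a customer buys `j` if `c ≠ 0` and nothing if `c = 0`. This reproduces the MNL choice
probabilities, and the projection to `j` is the multinomial vector of `M̂`. Every multinomial
load splits into its buying and non-buying parts, so `M̂` is at most the maximal buying load plus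
the maximal non-buying load. Exchanging the coin outcomes `0` and `2` preserves the law and turns
non-buyers into buyers, so the second term has expectation at most `E(M(U))`.
-/

variable {α β γ : Type*}

noncomputable def iidExpect [Fintype α] (T : ℕ) (w : α → ℝ) (F : (Fin T → α) → ℝ) : ℝ :=
  ∑ f : Fin T → α, (∏ t, w (f t)) * F f

noncomputable def pushWeight [Fintype α] [DecidableEq γ] (g : α → γ) (w : α → ℝ) (c : γ) : ℝ :=
  ∑ a ∈ univ.filter fun a => g a = c, w a

def prodWeight (p : α → ℝ) (ρ : β → ℝ) (z : α × β) : ℝ :=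
  p z.1 * ρ z.2

theorem iidExpect_pushWeight [Fintype α] [Fintype γ] [DecidableEq γ] (T : ℕ) (g : α → γ)
    (w : α → ℝ) (F : (Fin T → γ) → ℝ) :
    iidExpect T (pushWeight g w) F = iidExpect T w fun h => F (g ∘ h) := by
  have fiber (f : Fin T → γ) : ∏ t, pushWeight g w (f t) =
      ∑ h ∈ univ.filter fun h : Fin T → α => g ∘ h = f, ∏ t, w (h t) := by
    simp only [pushWeight]
    rw [prod_univ_sum]
    congr 1
    ext h
    simp [funext_iff]
  unfold iidExpect
  rw [← sum_fiberwise univ (fun h : Fin T → α => g ∘ h)]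
  refine sum_congr rfl fun f _ => ?_
  rw [fiber, sum_mul]
  exact sum_congr rfl fun h hh => by simp only [(mem_filter.mp hh).2]

theorem iidExpect_mono [Fintype α] {T : ℕ} {w : α → ℝ} (hw : 0 ≤ w) {F G : (Fin T → α) → ℝ}
    (hFG : ∀ f, F f ≤ G f) : iidExpect T w F ≤ iidExpect T w G :=
  sum_le_sum fun f _ => mul_le_mul_of_nonneg_left (hFG f) (prod_nonneg fun _ _ => hw _)

theorem iidExpect_add [Fintype α] (T : ℕ) (w : α → ℝ) (F G : (Fin T → α) → ℝ) :
    iidExpect T w (fun f => F f + G f) = iidExpect T w F + iidExpect T w G := by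
  simp only [iidExpect, mul_add, sum_add_distrib]

theorem pushWeight_apply_of_injective [Fintype α] [DecidableEq γ] {g : α → γ}
    (hg : Function.Injective g) (w : α → ℝ) (a : α) : pushWeight g w (g a) = w a := by
  have : (univ.filter fun a' => g a' = g a) = {a} := by ext; simp [hg.eq_iff]
  simp only [pushWeight, this, sum_singleton]

theorem pushWeight_eq_zero [Fintype α] [DecidableEq γ] {g : α → γ} (w : α → ℝ) {c : γ}
    (hc : ∀ a, g a ≠ c) : pushWeight g w c = 0 :=
  sum_eq_zero fun a ha => absurd (mem_filter.mp ha).2 (hc a)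

theorem pushWeight_perm [Fintype α] [DecidableEq α] (σ : Equiv.Perm α) {w : α → ℝ}
    (hσ : ∀ a, w (σ a) = w a) : pushWeight σ w = w := by
  funext c
  rw [← σ.apply_symm_apply c, pushWeight_apply_of_injective σ.injective, hσ]

theorem iidExpect_comp_perm [Fintype α] [DecidableEq α] (T : ℕ) (σ : Equiv.Perm α) {w : α → ℝ}
    (hσ : ∀ a, w (σ a) = w a) (F : (Fin T → α) → ℝ) :
    iidExpect T w (fun h => F (σ ∘ h)) = iidExpect T w F := by
  rw [← iidExpect_pushWeight, pushWeight_perm σ hσ]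

theorem pushWeight_fst [Fintype α] [Fintype β] [DecidableEq α] (p : α → ℝ) {ρ : β → ℝ}
    (hρ : ∑ b, ρ b = 1) : pushWeight Prod.fst (prodWeight p ρ) = p := by
  funext a
  simp only [pushWeight, prodWeight]
  rw [sum_filter, Fintype.sum_prod_type]
  simp [← mul_sum, hρ]

section Loads

variable {T : ℕ}

def load [DecidableEq γ] (f : Fin T → γ) (c : γ) : ℕ :=
  (univ.filter fun t => f t = c).card

theorem load_comp_of_injective {δ : Type*} [DecidableEq γ] [DecidableEq δ] {g : γ → δ}
    (hg : Function.Injective g) (f : Fin T → γ) (c : γ) : load (g ∘ f) (g c) = load f c := by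
  simp only [load, Function.comp_apply, hg.eq_iff]

def activeMap [DecidableEq β] (A : Finset β) (z : α × β) : Option α :=
  if z.2 ∈ A then some z.1 else none

def maxActiveLoad [Fintype α] [DecidableEq α] [DecidableEq β] (A : Finset β)
    (h : Fin T → α × β) : ℕ :=
  univ.sup fun a => load (activeMap A ∘ h) (some a)

theorem load_activeMap [DecidableEq α] [DecidableEq β] (A : Finset β) (h : Fin T → α × β)
    (a : α) : load (activeMap A ∘ h) (some a) =
      ((univ.filter fun t => (h t).1 = a).filter fun t => (h t).2 ∈ A).card := by
  simp only [load, filter_filter, Function.comp_apply, activeMap]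
  congr 1
  refine filter_congr fun t _ => ?_
  split_ifs <;> simp [*]

theorem load_fst_eq_add [Fintype β] [DecidableEq α] [DecidableEq β] (A : Finset β)
    (h : Fin T → α × β) (a : α) :
    load (Prod.fst ∘ h) a = load (activeMap A ∘ h) (some a) + load (activeMap Aᶜ ∘ h) (some a) := by
  simp only [load_activeMap, mem_compl]
  exact (card_filter_add_card_filter_not _).symm

theorem sup_load_fst_le [Fintype α] [Fintype β] [DecidableEq α] [DecidableEq β] (A : Finset β)
    (h : Fin T → α × β) :
    univ.sup (load (Prod.fst ∘ h)) ≤ maxActiveLoad A h + maxActiveLoad Aᶜ h :=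
  Finset.sup_le fun a _ => (load_fst_eq_add A h a).trans_le <|
    add_le_add (le_sup (f := fun a => load (activeMap A ∘ h) (some a)) (mem_univ a))
      (le_sup (f := fun a => load (activeMap Aᶜ ∘ h) (some a)) (mem_univ a))

theorem maxActiveLoad_compl_le [Fintype α] [Fintype β] [DecidableEq α] [DecidableEq β]
    {A : Finset β} {σ : Equiv.Perm β} (hσA : ∀ b ∉ A, σ b ∈ A) (h : Fin T → α × β) :
    maxActiveLoad Aᶜ h ≤ maxActiveLoad A (Equiv.prodCongr (Equiv.refl α) σ ∘ h) := by
  refine Finset.sup_le fun a _ =>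
    le_trans ?_ (le_sup (f := fun a => load (activeMap A ∘ _) (some a)) (mem_univ a))
  simp only [load_activeMap, mem_compl]
  exact card_le_card fun t ht => by
    simp only [mem_filter, mem_univ, true_and, Function.comp_apply, Equiv.prodCongr_apply,
      Prod.map_fst, Prod.map_snd, Equiv.coe_refl, id] at ht ⊢
    exact ⟨ht.1, hσA _ ht.2⟩

end Loads

theorem iidExpect_sup_load_le_two_mul [Fintype α] [Fintype β] [DecidableEq α] [DecidableEq β]
    (T : ℕ) {p : α → ℝ} (hp : 0 ≤ p) {ρ : β → ℝ} (hρ : 0 ≤ ρ) (hρ1 : ∑ b, ρ b = 1)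
    {A : Finset β} {σ : Equiv.Perm β} (hσρ : ∀ b, ρ (σ b) = ρ b) (hσA : ∀ b ∉ A, σ b ∈ A) :
    iidExpect T p (fun f => ((univ.sup (load f) : ℕ) : ℝ)) ≤
      2 * iidExpect T (prodWeight p ρ) (fun h => (maxActiveLoad A h : ℝ)) := by
  set w := prodWeight p ρ
  set σ' := Equiv.prodCongr (Equiv.refl α) σ
  have hw : 0 ≤ w := fun z => mul_nonneg (hp _) (hρ _)
  have hwσ : ∀ z, w (σ' z) = w z := fun z => by simp [w, σ', prodWeight, hσρ]
  calc iidExpect T p (fun f => ((univ.sup (load f) : ℕ) : ℝ))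
      = iidExpect T w (fun h => ((univ.sup (load (Prod.fst ∘ h)) : ℕ) : ℝ)) := by
        rw [← pushWeight_fst (β := β) p hρ1, iidExpect_pushWeight]
    _ ≤ iidExpect T w (fun h => (maxActiveLoad A h : ℝ) + maxActiveLoad Aᶜ h) :=
        iidExpect_mono hw fun h => by exact_mod_cast sup_load_fst_le A h
    _ = iidExpect T w (fun h => (maxActiveLoad A h : ℝ)) +
          iidExpect T w (fun h => (maxActiveLoad Aᶜ h : ℝ)) := iidExpect_add _ _ _ _
    _ ≤ iidExpect T w (fun h => (maxActiveLoad A h : ℝ)) +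
          iidExpect T w (fun h => (maxActiveLoad A (σ' ∘ h) : ℝ)) :=
        add_le_add_right
          (iidExpect_mono hw fun h => by exact_mod_cast maxActiveLoad_compl_le hσA h) _
    _ = 2 * iidExpect T w (fun h => (maxActiveLoad A h : ℝ)) := by
        rw [iidExpect_comp_perm T σ' hwσ (fun h => (maxActiveLoad A h : ℝ))]
        ring

theorem pushWeight_activeMap_none [Fintype α] [Fintype β] [DecidableEq α] [DecidableEq β]
    (A : Finset β) (p : α → ℝ) (ρ : β → ℝ) :
    pushWeight (activeMap A) (prodWeight p ρ) none = (∑ a, p a) * ∑ b ∈ Aᶜ, ρ b := by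
  unfold pushWeight
  rw [sum_filter, Fintype.sum_prod_type, sum_mul_sum]
  refine sum_congr rfl fun a _ => ?_
  rw [← sum_filter]
  exact sum_congr (by ext; simp [activeMap]) fun _ _ => rfl

theorem pushWeight_activeMap_some [Fintype α] [Fintype β] [DecidableEq α] [DecidableEq β]
    (A : Finset β) (p : α → ℝ) (ρ : β → ℝ) (a : α) :
    pushWeight (activeMap A) (prodWeight p ρ) (some a) = p a * ∑ b ∈ A, ρ b := by
  unfold pushWeight
  rw [sum_filter, Fintype.sum_prod_type, sum_eq_single a, mul_sum, ← sum_filter]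
  · exact sum_congr (by ext; simp [activeMap]) fun _ _ => rfl
  · intro a' _ ha'
    exact sum_eq_zero fun b _ => if_neg (by simp [activeMap, ha'])
  · simp

theorem staticEM_eq_iidExpect {n : ℕ} (T : ℕ) (v : Fin n → ℝ) (S : Finset (Fin n)) :
    staticEM T v S =
      iidExpect T (chooseProb v S) fun f => ((S.sup fun i => load f (some i) : ℕ) : ℝ) :=
  rfl

theorem multiExpMax_eq_iidExpect (T k : ℕ) (p : Fin k → ℝ) :
    multiExpMax T k p = iidExpect T p fun f => ((univ.sup (load f) : ℕ) : ℝ) :=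
  rfl

theorem chooseProb_map {m n : ℕ} (e : Fin m ↪ Fin n) (v : Fin n → ℝ) :
    chooseProb v (univ.map e) = pushWeight (Option.map e) (chooseProb (v ∘ e) univ) := by
  have hinj : Function.Injective (Option.map e) := Option.map_injective e.injective
  funext o
  rcases o with _ | i
  · rw [← Option.map_none (f := e), pushWeight_apply_of_injective hinj]
    simp [chooseProb, phi0]
  · by_cases hi : i ∈ univ.map e
    · obtain ⟨j, -, rfl⟩ := mem_map.mp hi
      rw [← Option.map_some (f := e), pushWeight_apply_of_injective hinj]
      simp [chooseProb, phi]
    · rw [pushWeight_eq_zero]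
      · simp [chooseProb, hi]
      · rintro (_ | j) h
        · simp at h
        · exact hi (mem_map.mpr ⟨j, mem_univ _, Option.some_injective _ h⟩)

theorem staticEM_map {m n : ℕ} (T : ℕ) (e : Fin m ↪ Fin n) (v : Fin n → ℝ) :
    staticEM T v (univ.map e) = staticEM T (v ∘ e) univ := by
  rw [staticEM_eq_iidExpect, chooseProb_map, iidExpect_pushWeight, staticEM_eq_iidExpect]
  congr 1
  funext f
  rw [sup_map]
  congr 2
  funext j
  exact load_comp_of_injective (Option.map_injective e.injective) f (some j)

noncomputable def coinWeight (V : ℝ) : Fin 3 → ℝ :=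
  ![1 / (1 + V), (V - 1) / (1 + V), 1 / (1 + V)]

theorem coinWeight_nonneg {V : ℝ} (hV : 1 ≤ V) : 0 ≤ coinWeight V := by
  intro b
  fin_cases b <;> simp [coinWeight] <;> positivity

theorem sum_coinWeight {V : ℝ} (hV : 1 + V ≠ 0) : ∑ b, coinWeight V b = 1 := by
  simp only [Fin.sum_univ_three, coinWeight, Matrix.cons_val]
  rw [← add_div, ← add_div, div_eq_one_iff_eq hV]
  ring

theorem chooseProb_univ_eq_pushWeight {k : ℕ} (u : Fin k → ℝ) (hV : ∑ j, u j ≠ 0) :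
    chooseProb u univ = pushWeight (activeMap {1, 2})
      (prodWeight (fun j => u j / ∑ j, u j) (coinWeight (∑ j, u j))) := by
  funext o
  rcases o with _ | a
  · rw [pushWeight_activeMap_none, ← sum_div, div_self hV, one_mul,
      show ({1, 2}ᶜ : Finset (Fin 3)) = {0} by decide, sum_singleton]
    simp [chooseProb, phi0, coinWeight]
  · rw [pushWeight_activeMap_some, sum_pair (by decide)]
    simp only [chooseProb, phi, mem_univ, if_true, coinWeight, Matrix.cons_val]
    field_simp
    ring

theorem multiExpMax_le_two_mul_staticEM_univ {k : ℕ} (T : ℕ) (u : Fin k → ℝ) (hu : 0 ≤ u)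
    (hV : 1 ≤ ∑ j, u j) :
    multiExpMax T k (fun j => u j / ∑ j, u j) ≤ 2 * staticEM T u univ := by
  have hVpos : 0 < ∑ j, u j := by linarith
  have hswap : ∀ b, coinWeight (∑ j, u j) (Equiv.swap 0 2 b) = coinWeight (∑ j, u j) b := by
    intro b
    fin_cases b <;> rfl
  rw [multiExpMax_eq_iidExpect, staticEM_eq_iidExpect, chooseProb_univ_eq_pushWeight u hVpos.ne',
    iidExpect_pushWeight]
  exact iidExpect_sup_load_le_two_mul T (fun j => div_nonneg (hu j) hVpos.le)
    (coinWeight_nonneg hV) (sum_coinWeight (by linarith)) hswap (by decide)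

theorem filter_val_lt_eq_map_castLEEmb {k n : ℕ} (hkn : k ≤ n) :
    (univ.filter fun i : Fin n => (i : ℕ) < k) = univ.map (Fin.castLEEmb hkn) := by
  ext i
  simp only [mem_filter, mem_univ, true_and, mem_map, Fin.coe_castLEEmb]
  exact ⟨fun hi => ⟨⟨i, hi⟩, rfl⟩, fun ⟨j, hj⟩ => hj ▸ j.isLt⟩

theorem static_prefix_at_least_half_multinomial_general
    (n T k : ℕ) (v : Fin n → ℝ) (hv : ∀ i, 0 < v i)
    (hkn : k ≤ n)
    (hk : 1 ≤ ∑ i ∈ Finset.univ.filter (fun i : Fin n => (i : ℕ) < k), v i) :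
    staticEM T v (Finset.univ.filter fun i : Fin n => (i : ℕ) < k) ≥
      (multiExpMax T k (fun i : Fin k =>
        v ⟨(i : ℕ), lt_of_lt_of_le i.isLt hkn⟩ /
          ∑ j ∈ Finset.univ.filter (fun j : Fin n => (j : ℕ) < k), v j)) / 2 := by
  rw [filter_val_lt_eq_map_castLEEmb hkn, sum_map] at hk ⊢
  rw [staticEM_map]
  have key := multiExpMax_le_two_mul_staticEM_univ T (v ∘ Fin.castLEEmb hkn) (fun i => (hv _).le) hk
  exact (div_le_iff₀' two_pos).mpr key

/-- Let `k` be minimal with `v_1 + ⋯ + v_k ≥ 1` (products sorted by weakly decreasing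
weight, total weight at least 1) and `U = {1,…,k}`. Then the expected maximum load of
statically offering `U` is at least half of the expected maximum component `E(M̂)` of a
multinomial vector with `T` trials and probabilities `p_i = v_i / v(U)`. -/
theorem static_prefix_at_least_half_multinomial
    (n T k : ℕ) (v : Fin n → ℝ) (hv : ∀ i, 0 < v i)
    (hsorted : ∀ i j : Fin n, i ≤ j → v j ≤ v i)
    (htotal : 1 ≤ ∑ i, v i)
    (hk1 : 1 ≤ k) (hkn : k ≤ n)
    (hk : 1 ≤ ∑ i ∈ Finset.univ.filter (fun i : Fin n => (i : ℕ) < k), v i)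
    (hmin : ∀ k' : ℕ, k' < k →
      ∑ i ∈ Finset.univ.filter (fun i : Fin n => (i : ℕ) < k'), v i < 1) :
    staticEM T v (Finset.univ.filter fun i : Fin n => (i : ℕ) < k) ≥
      (multiExpMax T k (fun i : Fin k =>
        v ⟨(i : ℕ), lt_of_lt_of_le i.isLt hkn⟩ /
          ∑ j ∈ Finset.univ.filter (fun j : Fin n => (j : ℕ) < k), v j)) / 2 :=
  static_prefix_at_least_half_multinomial_general n T k v hv hkn hk
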